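/- Let p > 1 and p' = p/(p−1). For every ε > 0 there exists a constant c_ε > 0 depending only on ε and p such that for all δ ≥ 0, all a ≥ 0 and all s, t ≥ 0: s·t ≤ ε·(δ+a+s)^{p−2}·s² + c_ε·((δ+a)^{p−1}+t)^{p'−2}·t². (This is the shifted Young inequality s·t ≤ ε·φ_a(s) + c_ε·(φ_a)^*(t) expressed through the explicit equivalents of φ_a and its convex conjugate.) -/

import Mathlib

/-!
Write `b = δ + a`. If `t ≤ ε (b + s)^(p-2) s`, multiplying by `s` gives `s t ≤ ε φ_a(s)`.
Otherwise it suffices to show `s ≲ (b^(p-1) + t)^(p'-2) t`. Since `x + y` lies between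
`max x y` and `2 max x y`, every real power of it is comparable to the same power of `max x y`;
the bound then follows in the three regimes `b ≤ s`; `s < b ∧ t ≤ b^(p-1)`; `s < b ∧ b^(p-1) < t`,
using `(p - 1)(p' - 1) = 1`.
-/

open Real

lemma min_one_rpow_mul_rpow_le_rpow {r K x y : ℝ} (hx : 0 < x) (hK : 1 ≤ K) (hxy : x ≤ y)
    (hyK : y ≤ K * x) : min 1 (K ^ r) * x ^ r ≤ y ^ r := by
  rcases le_or_gt 0 r with hr | hr
  · calc min 1 (K ^ r) * x ^ r ≤ 1 * x ^ r := by gcongr; exact min_le_left _ _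
      _ ≤ y ^ r := by rw [one_mul]; exact rpow_le_rpow hx.le hxy hr
  · calc min 1 (K ^ r) * x ^ r ≤ K ^ r * x ^ r := by gcongr; exact min_le_right _ _
      _ = (K * x) ^ r := (mul_rpow (by linarith) hx.le).symm
      _ ≤ y ^ r := rpow_le_rpow_of_nonpos (hx.trans_le hxy) hyK hr.le

lemma min_one_two_rpow_mul_rpow_le_rpow_add {r x y : ℝ} (hx : 0 < x) (hy : 0 ≤ y)
    (hyx : y ≤ x) : min 1 (2 ^ r) * x ^ r ≤ (x + y) ^ r :=
  min_one_rpow_mul_rpow_le_rpow hx one_le_two (by linarith) (by linarith)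

section ConjugateExponent

variable {p r : ℝ}

lemma min_one_rpow_mul_rpow_inv_le_rpow_add_mul (hr : (p - 1) * (r + 1) = 1) {B t K : ℝ}
    (hB : 0 ≤ B) (ht : 0 < t) (hK : 1 ≤ K) (hBt : B + t ≤ K * t) :
    min 1 (K ^ r) * t ^ (p - 1)⁻¹ ≤ (B + t) ^ r * t := by
  rw [← eq_inv_of_mul_eq_one_right hr, rpow_add_one ht.ne', ← mul_assoc]
  gcongr
  exact min_one_rpow_mul_rpow_le_rpow ht hK (by linarith) hBt

lemma rpow_sub_one_rpow_mul_rpow_sub_two_eq_one (hr : (p - 1) * (r + 1) = 1) {b : ℝ} (hb : 0 < b) :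
    (b ^ (p - 1)) ^ r * b ^ (p - 2) = 1 := by
  rw [← rpow_mul hb.le, ← rpow_add hb, show (p - 1) * r + (p - 2) = 0 by linarith, rpow_zero]

lemma mul_le_rpow_add_mul_of_le_of_mul_rpow_le (hp : 1 < p) (hr : (p - 1) * (r + 1) = 1)
    {η b s t : ℝ} (hη : 0 < η) (hb : 0 ≤ b) (hbs : b ≤ s) (ht : 0 < t)
    (hst : η * s ^ (p - 1) ≤ t) :
    min 1 ((η⁻¹ + 1) ^ r) * η ^ (p - 1)⁻¹ * s ≤ (b ^ (p - 1) + t) ^ r * t := by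
  have hs : 0 ≤ s := hb.trans hbs
  have hs_le : η ^ (p - 1)⁻¹ * s ≤ t ^ (p - 1)⁻¹ := by
    refine (le_rpow_inv_iff_of_pos (by positivity) ht.le (by linarith)).2 ?_
    rwa [mul_rpow (by positivity) hs, rpow_inv_rpow hη.le (by linarith)]
  have hBt : b ^ (p - 1) + t ≤ (η⁻¹ + 1) * t := by
    have : b ^ (p - 1) ≤ η⁻¹ * t := by
      rw [inv_mul_eq_div, le_div_iff₀ hη, mul_comm]
      exact hst.trans' (by gcongr)
    linarith
  calc min 1 ((η⁻¹ + 1) ^ r) * η ^ (p - 1)⁻¹ * s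
      = min 1 ((η⁻¹ + 1) ^ r) * (η ^ (p - 1)⁻¹ * s) := mul_assoc _ _ _
    _ ≤ min 1 ((η⁻¹ + 1) ^ r) * t ^ (p - 1)⁻¹ := by gcongr
    _ ≤ (b ^ (p - 1) + t) ^ r * t :=
      min_one_rpow_mul_rpow_inv_le_rpow_add_mul hr (by positivity) ht (by simp [hη.le]) hBt

lemma mul_le_rpow_add_mul_of_le_rpow (hr : (p - 1) * (r + 1) = 1) {η b s t : ℝ} (hb : 0 < b)
    (ht : 0 ≤ t) (hst : η * b ^ (p - 2) * s ≤ t) (htb : t ≤ b ^ (p - 1)) :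
    min 1 (2 ^ r) * η * s ≤ (b ^ (p - 1) + t) ^ r * t :=
  calc min 1 (2 ^ r) * η * s
      = min 1 (2 ^ r) * (b ^ (p - 1)) ^ r * (η * b ^ (p - 2) * s) := by
        linear_combination (-(min 1 (2 ^ r) * η * s)) * rpow_sub_one_rpow_mul_rpow_sub_two_eq_one hr hb
    _ ≤ min 1 (2 ^ r) * (b ^ (p - 1)) ^ r * t := by gcongr
    _ ≤ (b ^ (p - 1) + t) ^ r * t := by
      gcongr
      exact min_one_two_rpow_mul_rpow_le_rpow_add (by positivity) ht htb

lemma mul_le_rpow_add_mul_of_rpow_lt (hp : 1 < p) (hr : (p - 1) * (r + 1) = 1) {b s t : ℝ}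
    (hb : 0 ≤ b) (hsb : s ≤ b) (ht : 0 < t) (hbt : b ^ (p - 1) < t) :
    min 1 (2 ^ r) * s ≤ (b ^ (p - 1) + t) ^ r * t :=
  calc min 1 (2 ^ r) * s ≤ min 1 (2 ^ r) * t ^ (p - 1)⁻¹ := by
        gcongr
        exact hsb.trans ((le_rpow_inv_iff_of_pos hb ht.le (by linarith)).2 hbt.le)
    _ ≤ (b ^ (p - 1) + t) ^ r * t :=
      min_one_rpow_mul_rpow_inv_le_rpow_add_mul hr (by positivity) ht one_le_two (by linarith)

theorem exists_pos_mul_le_rpow_add_mul_of_lt (hp : 1 < p) (hr : (p - 1) * (r + 1) = 1)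
    {ε : ℝ} (hε : 0 < ε) :
    ∃ k > 0, ∀ b s t : ℝ, 0 ≤ b → 0 ≤ s → ε * ((b + s) ^ (p - 2) * s) < t →
      k * s ≤ (b ^ (p - 1) + t) ^ r * t := by
  set η := ε * min 1 (2 ^ (p - 2)) with hη_def
  have hη : 0 < η := by positivity
  refine ⟨min (min (min 1 ((η⁻¹ + 1) ^ r) * η ^ (p - 1)⁻¹) (min 1 (2 ^ r) * η)) (min 1 (2 ^ r)),
    by positivity, fun b s t hb hs hst => ?_⟩
  have ht : 0 < t := hst.trans_le' (by positivity)
  rcases hs.eq_or_lt with rfl | hs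
  · simpa using by positivity
  rcases le_or_gt b s with hbs | hsb
  · have hηs : η * s ^ (p - 1) ≤ t := by
      calc η * s ^ (p - 1) = ε * (min 1 (2 ^ (p - 2)) * s ^ (p - 2) * s) := by
            rw [mul_assoc _ (s ^ (p - 2)), ← rpow_add_one hs.ne', show p - 2 + 1 = p - 1 by ring,
              hη_def]; ring
        _ ≤ ε * ((b + s) ^ (p - 2) * s) := by
            gcongr; rw [add_comm]; exact min_one_two_rpow_mul_rpow_le_rpow_add hs hb hbs
        _ ≤ t := hst.le
    refine le_trans ?_ (mul_le_rpow_add_mul_of_le_of_mul_rpow_le hp hr hη hb hbs ht hηs)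
    exact mul_le_mul_of_nonneg_right ((min_le_left _ _).trans (min_le_left _ _)) hs.le
  have hb' : 0 < b := hs.trans hsb
  rcases le_or_gt t (b ^ (p - 1)) with htb | hbt
  · have hηb : η * b ^ (p - 2) * s ≤ t := by
      calc η * b ^ (p - 2) * s = ε * (min 1 (2 ^ (p - 2)) * b ^ (p - 2) * s) := by ring
        _ ≤ ε * ((b + s) ^ (p - 2) * s) := by
            gcongr; exact min_one_two_rpow_mul_rpow_le_rpow_add hb' hs.le hsb.le
        _ ≤ t := hst.le
    refine le_trans ?_ (mul_le_rpow_add_mul_of_le_rpow hr hb' ht.le hηb htb)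
    exact mul_le_mul_of_nonneg_right ((min_le_left _ _).trans (min_le_right _ _)) hs.le
  · refine le_trans ?_ (mul_le_rpow_add_mul_of_rpow_lt hp hr hb hsb.le ht hbt)
    exact mul_le_mul_of_nonneg_right (min_le_right _ _) hs.le

end ConjugateExponent

theorem stmt4 (p ε : ℝ) (hp : 1 < p) (hε : 0 < ε) :
    ∃ c : ℝ, 0 < c ∧
      ∀ δ : ℝ, 0 ≤ δ → ∀ a : ℝ, 0 ≤ a → ∀ s : ℝ, 0 ≤ s → ∀ t : ℝ, 0 ≤ t →
        s * t ≤ ε * ((δ + a + s) ^ (p - 2) * s ^ 2)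
              + c * (((δ + a) ^ (p - 1) + t) ^ (p / (p - 1) - 2) * t ^ 2) := by
  have hr : (p - 1) * (p / (p - 1) - 2 + 1) = 1 := by
    field_simp [(by linarith : p - 1 ≠ 0)]; ring
  obtain ⟨k, hk, hkey⟩ := exists_pos_mul_le_rpow_add_mul_of_lt hp hr hε
  refine ⟨k⁻¹, inv_pos.2 hk, fun δ hδ a ha s hs t ht => ?_⟩
  rcases le_or_gt t (ε * ((δ + a + s) ^ (p - 2) * s)) with hts | hst
  · calc s * t ≤ ε * ((δ + a + s) ^ (p - 2) * s ^ 2) := by nlinarith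
      _ ≤ _ := le_add_of_nonneg_right (by positivity)
  · have hs_le := hkey (δ + a) s t (by positivity) hs hst
    calc s * t ≤ k⁻¹ * (((δ + a) ^ (p - 1) + t) ^ (p / (p - 1) - 2) * t) * t := by
          gcongr; rwa [le_inv_mul_iff₀ hk]
      _ = k⁻¹ * (((δ + a) ^ (p - 1) + t) ^ (p / (p - 1) - 2) * t ^ 2) := by ring
      _ ≤ _ := le_add_of_nonneg_left (by positivity)
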